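/- arXiv:1905.06298 — 4 statements merged into one kernel-verified Lean document; each statement's English description precedes it below -/
import Mathlib

section
/- Let u : ℝ² → ℝ be differentiable at a point w, and suppose u agrees with an affine function l(x) = a·x + b on an open set U with w ∈ closure U, such that for some x ∈ U every open line segment (w, w+he) with h ≠ 0 sufficiently small and e not perpendicular to x - w is contained in U. Then Du(w) = a. -/
/-!
If `u` agrees with the affine function `y ↦ ⟪a, y⟫ + b` on an open segment issuing from `w` in
direction `e`, then `e` lies in the tangent cone of that segment at `w` (and continuity of `u`
gives `u w = ⟪a, w⟫ + b`), so `Du(w) e = ⟪a, e⟫`. The admissible directions are all vectors off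
the hyperplane `(x - w)ᗮ`, and a linear map is determined by its values off a proper subspace.
When `x = w`, the point `w` lies in the open set `U` and `u` is affine near `w`.
-/

open Set Filter Topology
open scoped RealInnerProductSpace

theorem ContinuousLinearMap.ext_of_forall_notMem {R M N : Type*} [Ring R] [TopologicalSpace M]
    [AddCommGroup M] [Module R M] [TopologicalSpace N] [AddCommGroup N] [Module R N]
    {p : Submodule R M} (hp : p ≠ ⊤) {f g : M →L[R] N} (h : ∀ v ∉ p, f v = g v) : f = g := by
  obtain ⟨d, -, hd⟩ := SetLike.exists_of_lt hp.lt_top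
  ext v
  by_cases hv : v ∈ p
  · have hvd : v + d ∉ p := fun hvd => hd (by simpa using p.sub_mem hvd hv)
    simpa using congrArg₂ (· - ·) (h _ hvd) (h d hd)
  · exact h v hv

section

variable {E F : Type*} [NormedAddCommGroup E] [NormedSpace ℝ E] [NormedAddCommGroup F]
  [NormedSpace ℝ F] {f g : E → F} {f' g' : E →L[ℝ] F} {w v : E}

theorem HasFDerivAt.apply_eq_of_eqOn_openSegment (hf : HasFDerivAt f f' w)
    (hg : HasFDerivAt g g' w) (hfg : EqOn f g (openSegment ℝ w (w + v))) : f' v = g' v := by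
  set s := openSegment ℝ w (w + v)
  have : (𝓝[s] w).NeBot := mem_closure_iff_nhdsWithin_neBot.mp
    (segment_subset_closure_openSegment (left_mem_segment ℝ w (w + v)))
  have hfgw : f w = g w := tendsto_nhds_unique_of_eventuallyEq
    hf.continuousAt.continuousWithinAt hg.continuousAt.continuousWithinAt
    (eventually_nhdsWithin_of_forall hfg)
  have hgf' : HasFDerivWithinAt g f' s w :=
    hf.hasFDerivWithinAt.congr (fun y hy => (hfg hy).symm) hfgw.symm
  simpa using hgf'.unique_on hg.hasFDerivWithinAt
    (mem_tangentConeAt_of_openSegment_subset subset_rfl)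

theorem HasFDerivAt.apply_eq_of_eqOn_openSegment_smul (hf : HasFDerivAt f f' w)
    (hg : HasFDerivAt g g' w) {c : ℝ} (hc : c ≠ 0)
    (hfg : EqOn f g (openSegment ℝ w (w + c • v))) : f' v = g' v := by
  have := hf.apply_eq_of_eqOn_openSegment hg hfg
  rw [map_smul, map_smul] at this
  exact smul_right_injective F hc this

end

theorem affine_on_open_set_gradient_general
    (u : EuclideanSpace ℝ (Fin 2) → ℝ) (w : EuclideanSpace ℝ (Fin 2))
    (a : EuclideanSpace ℝ (Fin 2)) (b : ℝ)
    (U : Set (EuclideanSpace ℝ (Fin 2)))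
    (hU : IsOpen U)
    (hdiff : DifferentiableAt ℝ u w)
    (haff : ∀ y ∈ U, u y = ⟪a, y⟫ + b)
    (x : EuclideanSpace ℝ (Fin 2)) (hx : x ∈ U)
    (hseg : ∀ e : EuclideanSpace ℝ (Fin 2), ‖e‖ = 1 → ⟪e, x - w⟫ ≠ 0 →
      ∃ h : ℝ, h ≠ 0 ∧ openSegment ℝ w (w + h • e) ⊆ U) :
    gradient u w = a := by
  set l := InnerProductSpace.toDual ℝ _ a
  have hl : HasFDerivAt (fun y => ⟪a, y⟫ + b) l w := l.hasFDerivAt.add_const b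
  suffices hu : HasFDerivAt u l w from (hasGradientAt_iff_hasFDerivAt.mpr hu).gradient
  suffices fderiv ℝ u w = l from this ▸ hdiff.hasFDerivAt
  by_cases hxw : x = w
  · subst hxw
    exact hdiff.hasFDerivAt.unique <| hl.congr_of_eventuallyEq <|
      eventually_of_mem (hU.mem_nhds hx) haff
  have hperp : (ℝ ∙ (x - w))ᗮ ≠ ⊤ := by
    rwa [Ne, Submodule.orthogonal_eq_top_iff, Submodule.span_singleton_eq_bot, sub_eq_zero]
  refine ContinuousLinearMap.ext_of_forall_notMem hperp fun v hv => ?_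
  rw [Submodule.mem_orthogonal_singleton_iff_inner_left] at hv
  have hv0 : ‖v‖ ≠ 0 := norm_ne_zero_iff.mpr (by rintro rfl; simp at hv)
  obtain ⟨h, hh, hsub⟩ := hseg (‖v‖⁻¹ • v) (norm_smul_inv_norm (norm_ne_zero_iff.mp hv0))
    (by simpa [real_inner_smul_left, hv0] using hv)
  rw [smul_smul] at hsub
  exact hdiff.hasFDerivAt.apply_eq_of_eqOn_openSegment_smul hl
    (mul_ne_zero hh (inv_ne_zero hv0)) fun y hy => haff y (hsub hy)

theorem affine_on_open_set_gradient
    (u : EuclideanSpace ℝ (Fin 2) → ℝ) (w : EuclideanSpace ℝ (Fin 2))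
    (a : EuclideanSpace ℝ (Fin 2)) (b : ℝ)
    (U : Set (EuclideanSpace ℝ (Fin 2)))
    (hU : IsOpen U)
    (hdiff : DifferentiableAt ℝ u w)
    (haff : ∀ y ∈ U, u y = ⟪a, y⟫ + b)
    (hw : w ∈ closure U)
    (x : EuclideanSpace ℝ (Fin 2)) (hx : x ∈ U)
    (hseg : ∀ e : EuclideanSpace ℝ (Fin 2), ‖e‖ = 1 → ⟪e, x - w⟫ ≠ 0 →
      ∃ h : ℝ, h ≠ 0 ∧ openSegment ℝ w (w + h • e) ⊆ U) :
    gradient u w = a :=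
  affine_on_open_set_gradient_general u w a b U hU hdiff haff x hx hseg
end

section
/- Let u : B(0,4) → ℝ satisfy sup_{x ∈ B(0,4)} |u(x) - x₂| ≤ λ for some λ ∈ (0,1), and let z̄ ∈ B(0,4) with u differentiable at z̄. Then the set {y ∈ B(0,4) : (e₂ - Du(z̄))·(y - z̄) < -2λ} is contained in the complement (within B(0,4)) of W := {y ∈ B(0,4) : u(y) > u(z̄) + Du(z̄)·(y - z̄)}, and {y ∈ B(0,4) : (e₂ - Du(z̄))·(y - z̄) > 2λ} ⊆ W. -/
open Metric Set
open scoped RealInnerProductSpace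

/-! If `u` stays within `λ` of the linear function `⟪e, ·⟫`, then any tangent plane of `u`
differs from `u` by the slope defect `⟪e - g, y - z⟫` up to an error `2λ`; hence the sign of
`u - (tangent plane)` is forced wherever the slope defect exceeds `2λ` in absolute value. -/

section FlatFunction

variable {E : Type*} [NormedAddCommGroup E] [InnerProductSpace ℝ E]
  {u : E → ℝ} {s : Set E} {e : E} {lam : ℝ}

theorem abs_sub_affine_sub_inner_le (hflat : ∀ x ∈ s, |u x - ⟪e, x⟫| ≤ lam)
    {y z : E} (hy : y ∈ s) (hz : z ∈ s) (g : E) :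
    |u y - (u z + ⟪g, y - z⟫) - ⟪e - g, y - z⟫| ≤ 2 * lam := by
  have hsplit : u y - (u z + ⟪g, y - z⟫) - ⟪e - g, y - z⟫
      = (u y - ⟪e, y⟫) - (u z - ⟪e, z⟫) := by
    rw [inner_sub_left, inner_sub_right, inner_sub_right]
    ring
  calc |u y - (u z + ⟪g, y - z⟫) - ⟪e - g, y - z⟫|
      ≤ |u y - ⟪e, y⟫| + |u z - ⟪e, z⟫| := hsplit ▸ abs_sub _ _
    _ ≤ 2 * lam := by linarith [hflat y hy, hflat z hz]

theorem lt_affine_of_inner_sub_lt (hflat : ∀ x ∈ s, |u x - ⟪e, x⟫| ≤ lam)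
    {y z : E} (hy : y ∈ s) (hz : z ∈ s) {g : E} (hlt : ⟪e - g, y - z⟫ < -2 * lam) :
    u y < u z + ⟪g, y - z⟫ := by
  linarith [(abs_le.mp (abs_sub_affine_sub_inner_le hflat hy hz g)).2]

theorem affine_lt_of_lt_inner_sub (hflat : ∀ x ∈ s, |u x - ⟪e, x⟫| ≤ lam)
    {y z : E} (hy : y ∈ s) (hz : z ∈ s) {g : E} (hgt : 2 * lam < ⟪e - g, y - z⟫) :
    u z + ⟪g, y - z⟫ < u y := by
  linarith [(abs_le.mp (abs_sub_affine_sub_inner_le hflat hy hz g)).1]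

end FlatFunction

theorem flat_halfplane_inclusions_general
    (u : EuclideanSpace ℝ (Fin 2) → ℝ) (lam : ℝ)
    (hflat : ∀ x ∈ ball (0 : EuclideanSpace ℝ (Fin 2)) 4, |u x - x 1| ≤ lam)
    (z : EuclideanSpace ℝ (Fin 2)) (hz : z ∈ ball (0 : EuclideanSpace ℝ (Fin 2)) 4)
    (e₂ : EuclideanSpace ℝ (Fin 2)) (he₂ : e₂ = EuclideanSpace.single 1 (1:ℝ))
    (W : Set (EuclideanSpace ℝ (Fin 2)))
    (hW : W = {y ∈ ball (0 : EuclideanSpace ℝ (Fin 2)) 4 |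
      u y > u z + ⟪gradient u z, y - z⟫}) :
    {y ∈ ball (0 : EuclideanSpace ℝ (Fin 2)) 4 | ⟪e₂ - gradient u z, y - z⟫ < -2 * lam}
      ⊆ ball (0 : EuclideanSpace ℝ (Fin 2)) 4 \ W ∧
    {y ∈ ball (0 : EuclideanSpace ℝ (Fin 2)) 4 | ⟪e₂ - gradient u z, y - z⟫ > 2 * lam}
      ⊆ W := by
  have hflat' : ∀ x ∈ ball (0 : EuclideanSpace ℝ (Fin 2)) 4, |u x - ⟪e₂, x⟫| ≤ lam := by
    simpa [he₂, EuclideanSpace.inner_single_left] using hflat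
  subst hW
  constructor
  · rintro y ⟨hy, hlt⟩
    exact ⟨hy, fun hyW => (lt_affine_of_inner_sub_lt hflat' hy hz hlt).not_gt hyW.2⟩
  · rintro y ⟨hy, hgt⟩
    exact ⟨hy, affine_lt_of_lt_inner_sub hflat' hy hz hgt⟩

theorem flat_halfplane_inclusions
    (u : EuclideanSpace ℝ (Fin 2) → ℝ) (lam : ℝ) (hlam : lam ∈ Set.Ioo (0:ℝ) 1)
    (hflat : ∀ x ∈ ball (0 : EuclideanSpace ℝ (Fin 2)) 4, |u x - x 1| ≤ lam)
    (z : EuclideanSpace ℝ (Fin 2)) (hz : z ∈ ball (0 : EuclideanSpace ℝ (Fin 2)) 4)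
    (hdiff : DifferentiableAt ℝ u z)
    (e₂ : EuclideanSpace ℝ (Fin 2)) (he₂ : e₂ = EuclideanSpace.single 1 (1:ℝ))
    (W : Set (EuclideanSpace ℝ (Fin 2)))
    (hW : W = {y ∈ ball (0 : EuclideanSpace ℝ (Fin 2)) 4 |
      u y > u z + ⟪gradient u z, y - z⟫}) :
    {y ∈ ball (0 : EuclideanSpace ℝ (Fin 2)) 4 | ⟪e₂ - gradient u z, y - z⟫ < -2 * lam}
      ⊆ ball (0 : EuclideanSpace ℝ (Fin 2)) 4 \ W ∧
    {y ∈ ball (0 : EuclideanSpace ℝ (Fin 2)) 4 | ⟪e₂ - gradient u z, y - z⟫ > 2 * lam}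
      ⊆ W :=
  flat_halfplane_inclusions_general u lam hflat z hz e₂ he₂ W hW
end

section
/- Let V ⊆ ℝ² be a bounded open set with boundary the simple closed curve γ = γ₀ ∪ [x̄, ȳ], and suppose u, differentiable at z̄ ∈ (x̄, ȳ), satisfies the comparison principle on V with affine functions (if u ≥ l on ∂V for affine l then u ≥ l on V). If there exist ε₀ > 0 and a unit vector ν perpendicular to ȳ - x̄ with z̄ + tν ∈ V for small t > 0, and u(y) ≥ u(z̄) + (Du(z̄) + ε₀ν)·(y - z̄) for all y ∈ ∂V, then we reach a contradiction: the one-sided derivative of u at z̄ in direction ν is simultaneously Du(z̄)·ν and ≥ Du(z̄)·ν + ε₀. -/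
/-!
Comparison with the affine function `l y = u z̄ + ⟪Du(z̄) + ε₀ ν, y - z̄⟫`, which agrees with `u` at
`z̄` and lies below it on `∂V`, gives `u ≥ l` on `V`. So `u - l` is minimal at `z̄` along the inward
ray `z̄ + tν`, and Fermat's rule forces its derivative `-ε₀` in direction `ν` to be nonnegative.
-/

open Metric Set
open scoped RealInnerProductSpace

theorem mem_posTangentConeAt_of_forall_Ioo_mem {E : Type*} [NormedAddCommGroup E]
    [NormedSpace ℝ E] {s : Set E} {x y : E} {δ : ℝ} (hδ : 0 < δ)
    (h : ∀ t : ℝ, 0 < t → t < δ → x + t • y ∈ s) : y ∈ posTangentConeAt s x := by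
  refine mem_posTangentConeAt_of_frequently_mem (Filter.Eventually.frequently ?_)
  filter_upwards [Ioo_mem_nhdsGT hδ] with t ht using h t ht.1 ht.2

theorem inner_le_inner_gradient_of_affine_le {E : Type*} [NormedAddCommGroup E]
    [InnerProductSpace ℝ E] [CompleteSpace E] {u : E → ℝ} {s : Set E} {z a ν : E}
    (hu : DifferentiableAt ℝ u z) (hle : ∀ y ∈ s, u z + ⟪a, y - z⟫ ≤ u y)
    (hν : ν ∈ posTangentConeAt s z) : ⟪a, ν⟫ ≤ ⟪gradient u z, ν⟫ := by
  have hmin : IsMinOn (fun y ↦ u y - ⟪a, y⟫) s z := fun y hy ↦ by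
    have := hle y hy
    rw [inner_sub_right] at this
    show u z - ⟪a, z⟫ ≤ u y - ⟪a, y⟫
    linarith
  have hderiv : HasFDerivAt (fun y ↦ u y - ⟪a, y⟫)
      (InnerProductSpace.toDual ℝ E (gradient u z) - innerSL ℝ a) z :=
    hu.hasGradientAt.hasFDerivAt.sub (innerSL ℝ a).hasFDerivAt
  have := hmin.localize.hasFDerivWithinAt_nonneg hderiv.hasFDerivWithinAt hν
  simp only [sub_apply, InnerProductSpace.toDual_apply_apply, innerSL_apply_apply] at this
  linarith

theorem no_interior_touching_configuration_general
    (u : EuclideanSpace ℝ (Fin 2) → ℝ)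
    (V : Set (EuclideanSpace ℝ (Fin 2)))
    (zbar : EuclideanSpace ℝ (Fin 2))
    (hdiff : DifferentiableAt ℝ u zbar)
    (hcomp : ∀ (a : EuclideanSpace ℝ (Fin 2)) (b : ℝ),
      (∀ y ∈ frontier V, u y ≥ ⟪a, y⟫ + b) → ∀ y ∈ V, u y ≥ ⟪a, y⟫ + b)
    (ν : EuclideanSpace ℝ (Fin 2)) (hν : ‖ν‖ = 1)
    (ε₀ : ℝ) (hε₀ : 0 < ε₀)
    (δ : ℝ) (hδ : 0 < δ)
    (hin : ∀ t : ℝ, 0 < t → t < δ → zbar + t • ν ∈ V)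
    (hbd : ∀ y ∈ frontier V, u y ≥ u zbar + ⟪gradient u zbar + ε₀ • ν, y - zbar⟫) :
    False := by
  set a := gradient u zbar + ε₀ • ν
  have haffine : ∀ y ∈ V, u zbar + ⟪a, y - zbar⟫ ≤ u y := by
    have habove := hcomp a (u zbar - ⟪a, zbar⟫) fun y hy ↦ by
      have := hbd y hy
      rw [inner_sub_right] at this
      linarith
    intro y hy
    have := habove y hy
    rw [inner_sub_right]
    linarith
  have hslope := inner_le_inner_gradient_of_affine_le hdiff haffine
    (mem_posTangentConeAt_of_forall_Ioo_mem hδ hin)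
  rw [inner_add_left, real_inner_smul_left, real_inner_self_eq_norm_sq, hν] at hslope
  linarith

theorem no_interior_touching_configuration
    (u : EuclideanSpace ℝ (Fin 2) → ℝ)
    (V : Set (EuclideanSpace ℝ (Fin 2)))
    (hVopen : IsOpen V) (hVbd : Bornology.IsBounded V)
    (hcont : ContinuousOn u (closure V))
    (xbar ybar zbar : EuclideanSpace ℝ (Fin 2))
    (hzseg : zbar ∈ openSegment ℝ xbar ybar)
    (hdiff : DifferentiableAt ℝ u zbar)
    (hcomp : ∀ (a : EuclideanSpace ℝ (Fin 2)) (b : ℝ),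
      (∀ y ∈ frontier V, u y ≥ ⟪a, y⟫ + b) → ∀ y ∈ V, u y ≥ ⟪a, y⟫ + b)
    (ν : EuclideanSpace ℝ (Fin 2)) (hν : ‖ν‖ = 1) (hperp : ⟪ν, ybar - xbar⟫ = 0)
    (ε₀ : ℝ) (hε₀ : 0 < ε₀)
    (δ : ℝ) (hδ : 0 < δ)
    (hin : ∀ t : ℝ, 0 < t → t < δ → zbar + t • ν ∈ V)
    (hbd : ∀ y ∈ frontier V, u y ≥ u zbar + ⟪gradient u zbar + ε₀ • ν, y - zbar⟫) :
    False :=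
  no_interior_touching_configuration_general u V zbar hdiff hcomp ν hν ε₀ hε₀ δ hδ hin hbd
end

section
/- Let W ⊆ B(0,4) ⊆ ℝ² be the open set {y ∈ B(0,4) : u(y) > u(z̄) + Du(z̄)·(y−z̄)} for a function u continuous on B̄(0,4) satisfying the comparison principle with affine functions (if u ≤ l on the boundary of a bounded open set V with V̄ ⊆ B̄(0,4) for affine l, then u ≤ l in V, and same with ≥). If W₀ is a connected component of W whose closure is contained in B(0,4), then u(y) = u(z̄) + Du(z̄)·(y−z̄) on W₀, contradicting the definition of W; hence every connected component of W has closure meeting ∂B(0,4). -/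
/-!
If a component `V` of `W` stayed away from the sphere, its frontier would lie in the open ball
but outside `W` (a frontier point of a component inside `W` would join the component), so there
`u` is at most the tangent plane `l`. Comparison with the affine function `l` on `V` then gives
`u ≤ l` on `V`, while `u > l` on `V ⊆ W`.
-/

open Metric Set
open scoped RealInnerProductSpace

theorem IsOpen.inter_setOf_lt_of_continuousOn {X α : Type*} [TopologicalSpace X]
    [TopologicalSpace α] [LinearOrder α] [OrderClosedTopology α] {U : Set X} {f g : X → α}
    (hU : IsOpen U) (hf : ContinuousOn f U) (hg : ContinuousOn g U) :
    IsOpen {y ∈ U | f y < g y} :=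
  (hf.prodMk hg).isOpen_inter_preimage hU isOpen_lt_prod

theorem closure_connectedComponentIn_inter_subset {X : Type*} [TopologicalSpace X]
    {W : Set X} {x : X} : closure (connectedComponentIn W x) ∩ W ⊆ connectedComponentIn W x := by
  rintro y ⟨hy, hyW⟩
  rcases (connectedComponentIn W x).eq_empty_or_nonempty with hC | hC
  · simp [hC] at hy
  have hxW : x ∈ W := connectedComponentIn_nonempty_iff.mp hC
  have hpre : IsPreconnected (insert y (connectedComponentIn W x)) :=
    isPreconnected_connectedComponentIn.subset_closure (subset_insert _ _)
      (insert_subset hy subset_closure)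
  exact hpre.subset_connectedComponentIn (mem_insert_of_mem _ (mem_connectedComponentIn hxW))
    (insert_subset hyW (connectedComponentIn_subset W x)) (mem_insert y _)

theorem disjoint_frontier_connectedComponentIn {X : Type*} [TopologicalSpace X]
    [LocallyConnectedSpace X] {W : Set X} (hW : IsOpen W) (x : X) :
    Disjoint (frontier (connectedComponentIn W x)) W := by
  rw [disjoint_left, hW.connectedComponentIn.frontier_eq]
  exact fun y hy hyW => hy.2 (closure_connectedComponentIn_inter_subset ⟨hy.1, hyW⟩)

theorem closure_subset_ball_of_inter_sphere_eq_empty {E : Type*} [NormedAddCommGroup E]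
    [NormedSpace ℝ E] {s : Set E} {c : E} {r : ℝ} (hs : s ⊆ ball c r)
    (hsphere : closure s ∩ sphere c r = ∅) : closure s ⊆ ball c r := by
  rcases eq_or_ne r 0 with rfl | hr
  · simp_all
  rw [← closedBall_sdiff_sphere]
  exact subset_sdiff.mpr ⟨(closure_mono hs).trans (closure_ball c hr).subset,
    disjoint_iff_inter_eq_empty.mpr hsphere⟩

theorem component_reaches_boundary_general
    (u : EuclideanSpace ℝ (Fin 2) → ℝ)
    (hcont : ContinuousOn u (closedBall (0 : EuclideanSpace ℝ (Fin 2)) 4))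
    (zbar : EuclideanSpace ℝ (Fin 2))
    (hcompLe : ∀ V : Set (EuclideanSpace ℝ (Fin 2)), IsOpen V → Bornology.IsBounded V →
      closure V ⊆ closedBall (0 : EuclideanSpace ℝ (Fin 2)) 4 →
      ∀ (a : EuclideanSpace ℝ (Fin 2)) (b : ℝ),
        (∀ y ∈ frontier V, u y ≤ ⟪a, y⟫ + b) → ∀ y ∈ V, u y ≤ ⟪a, y⟫ + b)
    (W : Set (EuclideanSpace ℝ (Fin 2)))
    (hW : W = {y ∈ ball (0 : EuclideanSpace ℝ (Fin 2)) 4 |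
      u y > u zbar + ⟪gradient u zbar, y - zbar⟫}) :
    ∀ x ∈ W, (closure (connectedComponentIn W x) ∩
      sphere (0 : EuclideanSpace ℝ (Fin 2)) 4).Nonempty := by
  intro x hx
  by_contra hsphere
  rw [not_nonempty_iff_eq_empty] at hsphere
  set a := gradient u zbar
  set b := u zbar - ⟪a, zbar⟫
  have hl : ∀ y, u zbar + ⟪a, y - zbar⟫ = ⟪a, y⟫ + b := fun y => by rw [inner_sub_right]; ring
  have hWopen : IsOpen W := hW ▸ isOpen_ball.inter_setOf_lt_of_continuousOn
    (by fun_prop) (hcont.mono ball_subset_closedBall)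
  set V := connectedComponentIn W x
  have hVball : V ⊆ ball 0 4 := (connectedComponentIn_subset W x).trans (hW ▸ sep_subset _ _)
  have hclV := closure_subset_ball_of_inter_sphere_eq_empty hVball hsphere
  have hfrontier : ∀ y ∈ frontier V, u y ≤ ⟪a, y⟫ + b := by
    intro y hy
    have hyW : y ∉ W := disjoint_left.mp (disjoint_frontier_connectedComponentIn hWopen x) hy
    rw [hW] at hyW
    exact not_lt.mp fun h => hyW ⟨hclV hy.1, by rwa [gt_iff_lt, hl]⟩
  have hxV := hcompLe V hWopen.connectedComponentIn (isBounded_ball.subset hVball)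
    (hclV.trans ball_subset_closedBall) a b hfrontier x (mem_connectedComponentIn hx)
  rw [hW] at hx
  linarith [hx.2, hl x]

theorem component_reaches_boundary
    (u : EuclideanSpace ℝ (Fin 2) → ℝ)
    (hcont : ContinuousOn u (closedBall (0 : EuclideanSpace ℝ (Fin 2)) 4))
    (zbar : EuclideanSpace ℝ (Fin 2)) (hzbar : zbar ∈ ball (0 : EuclideanSpace ℝ (Fin 2)) 4)
    (hdiff : DifferentiableAt ℝ u zbar)
    (hcompLe : ∀ V : Set (EuclideanSpace ℝ (Fin 2)), IsOpen V → Bornology.IsBounded V →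
      closure V ⊆ closedBall (0 : EuclideanSpace ℝ (Fin 2)) 4 →
      ∀ (a : EuclideanSpace ℝ (Fin 2)) (b : ℝ),
        (∀ y ∈ frontier V, u y ≤ ⟪a, y⟫ + b) → ∀ y ∈ V, u y ≤ ⟪a, y⟫ + b)
    (hcompGe : ∀ V : Set (EuclideanSpace ℝ (Fin 2)), IsOpen V → Bornology.IsBounded V →
      closure V ⊆ closedBall (0 : EuclideanSpace ℝ (Fin 2)) 4 →
      ∀ (a : EuclideanSpace ℝ (Fin 2)) (b : ℝ),
        (∀ y ∈ frontier V, u y ≥ ⟪a, y⟫ + b) → ∀ y ∈ V, u y ≥ ⟪a, y⟫ + b)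
    (W : Set (EuclideanSpace ℝ (Fin 2)))
    (hW : W = {y ∈ ball (0 : EuclideanSpace ℝ (Fin 2)) 4 |
      u y > u zbar + ⟪gradient u zbar, y - zbar⟫}) :
    ∀ x ∈ W, (closure (connectedComponentIn W x) ∩
      sphere (0 : EuclideanSpace ℝ (Fin 2)) 4).Nonempty :=
  component_reaches_boundary_general u hcont zbar hcompLe W hW
end
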